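/- arXiv:2302.03428 — 3 statements merged into one kernel-verified Lean document; each statement's English description precedes it below -/
import Mathlib

section
/- Let S ~ Gamma(n, σ) with integer shape n ≥ 1 and scale σ > 0, and fix p ≠ 0 with p > -(n+1) (so that all expectations below are finite). Then the function c ↦ E[exp(p(cS/σ - 1)) - p(cS/σ - 1) - 1] over c with pc/σ·σ < 1 (i.e., pc < 1) is uniquely minimized at c₀ = p⁻¹(1 - e^{-p/(n+1)}). -/
/-!
Write `u = 1 - p c`, which is positive exactly when `p c < 1`. Tilting the gamma density by
`exp (t x)` only changes its rate, so `E[exp (t S)] = (1 - σ t)^(-n)` for `t < 1/σ`, and with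
`E[S] = n σ` the risk becomes `exp (-p) u^(-n) + n u + (p - 1 - n)`. Bernoulli's inequality at
`u₀ / u` shows that `u ↦ u₀^(n+1) u^(-n) + n u` has the strict minimum `(n+1) u₀` at `u = u₀`,
and `u₀ = exp (-p/(n+1))` is the point where `u₀^(n+1) = exp (-p)`.
-/

open MeasureTheory ProbabilityTheory Real

lemma lt_rpow_mul_rpow_neg_add_mul {a u v : ℝ} (ha : 0 < a) (hu : 0 < u) (hv : 0 < v)
    (huv : u ≠ v) : (a + 1) * v < v ^ (a + 1) * u ^ (-a) + a * u := by
  have hbernoulli : 1 + (a + 1) * (v / u - 1) < (v / u) ^ (a + 1) := by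
    have hvu : v / u - 1 ≠ 0 := sub_ne_zero.mpr (div_ne_one_of_ne huv.symm)
    simpa using one_add_mul_self_lt_rpow_one_add (by linarith [div_pos hv hu]) hvu
      (by linarith : 1 < a + 1)
  have hscale : (v / u) ^ (a + 1) * u = v ^ (a + 1) * u ^ (-a) := by
    rw [div_rpow hv.le hu.le, rpow_add_one hu.ne', rpow_neg hu.le]
    field_simp
  calc (a + 1) * v = (1 + (a + 1) * (v / u - 1)) * u + a * u := by field_simp; ring
    _ < (v / u) ^ (a + 1) * u + a * u := by gcongr
    _ = v ^ (a + 1) * u ^ (-a) + a * u := by rw [hscale]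

namespace ProbabilityTheory

variable {a r : ℝ}

lemma measurable_gammaPDF (a r : ℝ) : Measurable (gammaPDF a r) :=
  (measurable_gammaPDFReal a r).ennreal_ofReal

lemma integral_gammaMeasure (ha : 0 < a) (hr : 0 < r) (g : ℝ → ℝ) :
    ∫ x, g x ∂gammaMeasure a r = ∫ x, gammaPDFReal a r x * g x := by
  rw [gammaMeasure, integral_withDensity_eq_integral_toReal_smul
    (measurable_gammaPDF a r) (ae_of_all _ fun _ => ENNReal.ofReal_lt_top)]
  simp only [gammaPDF, ENNReal.toReal_ofReal (gammaPDFReal_nonneg ha hr _), smul_eq_mul]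

lemma integrable_gammaMeasure_iff (ha : 0 < a) (hr : 0 < r) {g : ℝ → ℝ} :
    Integrable g (gammaMeasure a r) ↔ Integrable (fun x => gammaPDFReal a r x * g x) := by
  rw [gammaMeasure, integrable_withDensity_iff_integrable_smul'
    (measurable_gammaPDF a r) (ae_of_all _ fun _ => ENNReal.ofReal_lt_top)]
  simp only [gammaPDF, ENNReal.toReal_ofReal (gammaPDFReal_nonneg ha hr _), smul_eq_mul]

lemma integrable_gammaPDFReal (ha : 0 < a) (hr : 0 < r) : Integrable (gammaPDFReal a r) := by
  have := isProbabilityMeasure_gammaMeasure ha hr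
  simpa using (integrable_gammaMeasure_iff ha hr).1 (integrable_const (1 : ℝ))

lemma integral_gammaPDFReal (ha : 0 < a) (hr : 0 < r) : ∫ x, gammaPDFReal a r x = 1 := by
  have := isProbabilityMeasure_gammaMeasure ha hr
  simpa using (integral_gammaMeasure ha hr fun _ => 1).symm

lemma gammaPDFReal_mul_exp_mul (hr : 0 ≤ r) {t : ℝ} (ht : t < r) (x : ℝ) :
    gammaPDFReal a r x * exp (t * x) = (r / (r - t)) ^ a * gammaPDFReal a (r - t) x := by
  have hrt : 0 < r - t := sub_pos.mpr ht
  unfold gammaPDFReal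
  split_ifs
  · rw [div_rpow hr hrt.le, mul_assoc, ← exp_add]
    field_simp
    ring_nf
  · simp

lemma gammaPDFReal_mul_self (ha : 0 < a) (hr : 0 < r) (x : ℝ) :
    gammaPDFReal a r x * x = a / r * gammaPDFReal (a + 1) r x := by
  unfold gammaPDFReal
  split_ifs with hx
  · have hxa : x ^ a = x ^ (a - 1) * x := by
      rw [← rpow_add_one' hx (by linarith), sub_add_cancel]
    rw [Gamma_add_one ha.ne', add_sub_cancel_right, rpow_add_one hr.ne', hxa]
    have := (Gamma_pos_of_pos ha).ne'
    field_simp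
  · simp

lemma integrable_exp_mul_gammaMeasure (ha : 0 < a) (hr : 0 < r) {t : ℝ} (ht : t < r) :
    Integrable (fun x => exp (t * x)) (gammaMeasure a r) := by
  rw [integrable_gammaMeasure_iff ha hr]
  simp_rw [gammaPDFReal_mul_exp_mul hr.le ht]
  exact (integrable_gammaPDFReal ha (sub_pos.mpr ht)).const_mul _

lemma mgf_gammaMeasure (ha : 0 < a) (hr : 0 < r) {t : ℝ} (ht : t < r) :
    mgf id (gammaMeasure a r) t = (r / (r - t)) ^ a := by
  rw [mgf, integral_gammaMeasure ha hr]
  simp_rw [id, gammaPDFReal_mul_exp_mul hr.le ht]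
  rw [integral_const_mul, integral_gammaPDFReal ha (sub_pos.mpr ht), mul_one]

lemma integrable_id_gammaMeasure (ha : 0 < a) (hr : 0 < r) :
    Integrable (fun x => x) (gammaMeasure a r) := by
  rw [integrable_gammaMeasure_iff ha hr]
  simp_rw [gammaPDFReal_mul_self ha hr]
  exact (integrable_gammaPDFReal (by linarith) hr).const_mul _

lemma integral_id_gammaMeasure (ha : 0 < a) (hr : 0 < r) :
    ∫ x, x ∂gammaMeasure a r = a / r := by
  rw [integral_gammaMeasure ha hr]
  simp_rw [gammaPDFReal_mul_self ha hr]
  rw [integral_const_mul, integral_gammaPDFReal (by linarith) hr, mul_one]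

lemma integral_linex_gammaMeasure {a σ p c : ℝ} (ha : 0 < a) (hσ : 0 < σ) (hpc : p * c < 1) :
    ∫ x, (exp (p * (c * x / σ - 1)) - p * (c * x / σ - 1) - 1) ∂gammaMeasure a (1 / σ)
      = exp (-p) * (1 - p * c) ^ (-a) + a * (1 - p * c) + (p - 1 - a) := by
  have hr : 0 < 1 / σ := by positivity
  have ht : p * c / σ < 1 / σ := by gcongr
  have := isProbabilityMeasure_gammaMeasure ha hr
  have hsplit : ∀ x, exp (p * (c * x / σ - 1)) - p * (c * x / σ - 1) - 1
      = exp (-p) * exp (p * c / σ * x) - p * c / σ * x + (p - 1) := fun x => by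
    rw [← exp_add]; ring_nf
  have hexp := integrable_exp_mul_gammaMeasure ha hr ht
  have hid := integrable_id_gammaMeasure ha hr
  have hmgf : ∫ x, exp (p * c / σ * x) ∂gammaMeasure a (1 / σ) = _ := mgf_gammaMeasure ha hr ht
  simp_rw [hsplit]
  rw [integral_add (f := fun x => exp (-p) * exp (p * c / σ * x) - p * c / σ * x)
      ((hexp.const_mul _).sub (hid.const_mul _)) (integrable_const _),
    integral_sub (hexp.const_mul _) (hid.const_mul _), integral_const_mul, integral_const_mul,
    hmgf, integral_id_gammaMeasure ha hr, integral_const]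
  have hu : 0 < 1 - p * c := by linarith
  have hratio : 1 / σ / (1 / σ - p * c / σ) = (1 - p * c)⁻¹ := by field_simp
  rw [hratio, inv_rpow hu.le, ← rpow_neg hu.le, probReal_univ]
  field_simp
  ring

end ProbabilityTheory

theorem gamma_linex_risk_uniquely_minimized_general (n : ℕ) (hn : 1 ≤ n) (σ p : ℝ)
    (hσ : 0 < σ) (hp : p ≠ 0) :
    let R : ℝ → ℝ := fun c =>
      ∫ x, (Real.exp (p * (c * x / σ - 1)) - p * (c * x / σ - 1) - 1)
        ∂(gammaMeasure n (1 / σ))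
    let c₀ : ℝ := p⁻¹ * (1 - Real.exp (-p / (n + 1)))
    p * c₀ < 1 ∧ ∀ c : ℝ, p * c < 1 → c ≠ c₀ → R c₀ < R c := by
  intro R c₀
  have hn_pos : 0 < (n : ℝ) := by exact_mod_cast hn
  set u₀ := exp (-p / (n + 1))
  have hu₀ : 0 < u₀ := exp_pos _
  have hpc₀ : p * c₀ = 1 - u₀ := mul_inv_cancel_left₀ hp _
  have hR : ∀ c, p * c < 1 →
      R c = u₀ ^ ((n : ℝ) + 1) * (1 - p * c) ^ (-(n : ℝ)) + n * (1 - p * c) + (p - 1 - n) := by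
    intro c hc
    have hu₀pow : u₀ ^ ((n : ℝ) + 1) = exp (-p) := by rw [← exp_mul]; field_simp
    rw [hu₀pow]
    exact integral_linex_gammaMeasure hn_pos hσ hc
  have hc₀ : p * c₀ < 1 := by linarith
  refine ⟨hc₀, fun c hc hne => ?_⟩
  have hne' : 1 - p * c ≠ u₀ := fun h => hne (mul_left_cancel₀ hp (by linarith))
  have hR₀ : R c₀ = (n + 1) * u₀ + (p - 1 - n) := by
    rw [hR c₀ hc₀, hpc₀, sub_sub_cancel, ← rpow_add hu₀, add_neg_cancel_comm, rpow_one]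
    ring
  rw [hR₀, hR c hc]
  linarith [lt_rpow_mul_rpow_neg_add_mul hn_pos (by linarith) hu₀ hne']

/-- The linex risk `c ↦ E[exp (p (c S / σ - 1)) - p (c S / σ - 1) - 1]` of the scale
equivariant estimator `c S`, where `S ~ Gamma(n, σ)` with integer shape `n ≥ 1`, is
uniquely minimized over `{c | p c < 1}` at `c₀ = p⁻¹ (1 - exp (-p/(n+1)))`. -/
theorem gamma_linex_risk_uniquely_minimized (n : ℕ) (hn : 1 ≤ n) (σ p : ℝ)
    (hσ : 0 < σ) (hp : p ≠ 0) (hp' : -((n : ℝ) + 1) < p) :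
    let R : ℝ → ℝ := fun c =>
      ∫ x, (Real.exp (p * (c * x / σ - 1)) - p * (c * x / σ - 1) - 1)
        ∂(gammaMeasure n (1 / σ))
    let c₀ : ℝ := p⁻¹ * (1 - Real.exp (-p / (n + 1)))
    p * c₀ < 1 ∧ ∀ c : ℝ, p * c < 1 → c ≠ c₀ → R c₀ < R c :=
  gamma_linex_risk_uniquely_minimized_general n hn σ p hσ hp
end

section
/- Fix σ > 0, θ > 0, p ≠ 0, and integer m ≥ 1. The conditional risk function ψ ↦ E[exp(p(Tψ/σ - 1)) - p(Tψ/σ - 1) - 1], where T ~ Gamma(m, θ), is finite and strictly convex on the domain {ψ : pψθ/σ < 1}, and is uniquely minimized at ψ* = (σ/(pθ))(1 - e^{-p/(m+1)}). -/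
open MeasureTheory ProbabilityTheory Real
open scoped ENNReal NNReal

namespace GammaRiskAux

lemma integrable_pdf {a r : ℝ} (ha : 0 < a) (hr : 0 < r) :
    Integrable (gammaPDFReal a r) := by
  refine ⟨(measurable_gammaPDFReal a r).aestronglyMeasurable, ?_⟩
  rw [hasFiniteIntegral_iff_ofReal (ae_of_all _ (gammaPDFReal_nonneg ha hr))]
  have : ∀ x, ENNReal.ofReal (gammaPDFReal a r x) = gammaPDF a r x := fun x => rfl
  simp_rw [this, lintegral_gammaPDF_eq_one ha hr]
  exact ENNReal.one_lt_top

lemma integral_pdf {a r : ℝ} (ha : 0 < a) (hr : 0 < r) :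
    ∫ x, gammaPDFReal a r x = 1 := by
  rw [integral_eq_lintegral_of_nonneg_ae (ae_of_all _ (gammaPDFReal_nonneg ha hr))
    (measurable_gammaPDFReal a r).aestronglyMeasurable]
  have : ∀ x, ENNReal.ofReal (gammaPDFReal a r x) = gammaPDF a r x := fun x => rfl
  simp_rw [this, lintegral_gammaPDF_eq_one ha hr, ENNReal.toReal_one]

lemma measure_eq (a r : ℝ) :
    gammaMeasure a r
      = volume.withDensity (fun x => ((gammaPDFReal a r x).toNNReal : ℝ≥0∞)) := rfl

lemma integrable_iff {a r : ℝ} (ha : 0 < a) (hr : 0 < r) (g : ℝ → ℝ) :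
    Integrable g (gammaMeasure a r)
      ↔ Integrable (fun x => gammaPDFReal a r x * g x) volume := by
  rw [measure_eq]
  rw [integrable_withDensity_iff_integrable_coe_smul
    (measurable_gammaPDFReal a r).real_toNNReal]
  refine integrable_congr (ae_of_all _ fun x => ?_)
  simp [Real.coe_toNNReal _ (gammaPDFReal_nonneg ha hr x)]

lemma integral_eq {a r : ℝ} (ha : 0 < a) (hr : 0 < r) (g : ℝ → ℝ) :
    ∫ x, g x ∂(gammaMeasure a r) = ∫ x, gammaPDFReal a r x * g x := by
  rw [measure_eq, integral_withDensity_eq_integral_smul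
    (measurable_gammaPDFReal a r).real_toNNReal]
  refine integral_congr_ae (ae_of_all _ fun x => ?_)
  simp [NNReal.smul_def, Real.coe_toNNReal _ (gammaPDFReal_nonneg ha hr x)]



lemma pdf_mul_exp {a r t : ℝ} (hr : 0 < r) (hrt : 0 < r - t) (x : ℝ) :
    gammaPDFReal a r x * Real.exp (t * x)
      = (r / (r - t)) ^ a * gammaPDFReal a (r - t) x := by
  unfold gammaPDFReal
  rcases le_or_gt 0 x with hx | hx
  · rw [if_pos hx, if_pos hx]
    rw [mul_assoc, ← Real.exp_add]
    have h1 : -(r * x) + t * x = -((r - t) * x) := by ring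
    have h2 : (r / (r - t)) ^ a * ((r - t) ^ a / Real.Gamma a) = r ^ a / Real.Gamma a := by
      have hne := (Real.rpow_pos_of_pos hrt a).ne'
      rw [Real.div_rpow hr.le hrt.le]
      field_simp
    rw [h1, ← h2]; ring
  · rw [if_neg (not_le.mpr hx), if_neg (not_le.mpr hx), zero_mul, mul_zero]

lemma pdf_mul_id {a r : ℝ} (ha : 0 < a) (hr : 0 < r) (x : ℝ) :
    gammaPDFReal a r x * x = a / r * gammaPDFReal (a + 1) r x := by
  unfold gammaPDFReal
  rcases le_or_gt 0 x with hx | hx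
  · rw [if_pos hx, if_pos hx]
    rcases eq_or_lt_of_le hx with h0 | h0
    · rw [← h0]
      rw [add_sub_cancel_right, Real.zero_rpow ha.ne']
      ring
    · have hxa : x ^ (a - 1) * x = x ^ a := by
        rw [show x ^ (a - 1) * x = x ^ (a - 1) * x ^ (1 : ℝ) by rw [Real.rpow_one],
          ← Real.rpow_add h0, sub_add_cancel]
      have hG : Real.Gamma (a + 1) = a * Real.Gamma a := Real.Gamma_add_one ha.ne'
      have hra : r ^ (a + 1) = r ^ a * r := by
        rw [Real.rpow_add hr, Real.rpow_one]
      rw [hG, hra]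
      have hGa := (Real.Gamma_pos_of_pos ha).ne'
      rw [add_sub_cancel_right]
      field_simp
      linear_combination hxa
  · rw [if_neg (not_le.mpr hx), if_neg (not_le.mpr hx), zero_mul, mul_zero]


lemma integrable_exp_gamma {a r t : ℝ} (ha : 0 < a) (hr : 0 < r) (ht : t < r) :
    Integrable (fun x => Real.exp (t * x)) (gammaMeasure a r) := by
  have hrt : 0 < r - t := by linarith
  rw [integrable_iff ha hr]
  simp_rw [pdf_mul_exp hr hrt]
  exact (integrable_pdf ha hrt).const_mul _

lemma integral_exp_gamma {a r t : ℝ} (ha : 0 < a) (hr : 0 < r) (ht : t < r) :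
    ∫ x, Real.exp (t * x) ∂(gammaMeasure a r) = (r / (r - t)) ^ a := by
  have hrt : 0 < r - t := by linarith
  rw [integral_eq ha hr]
  simp_rw [pdf_mul_exp hr hrt]
  rw [integral_const_mul, integral_pdf ha hrt, mul_one]

lemma integrable_id_gamma {a r : ℝ} (ha : 0 < a) (hr : 0 < r) :
    Integrable (fun x => x) (gammaMeasure a r) := by
  rw [integrable_iff ha hr]
  simp_rw [pdf_mul_id ha hr]
  exact (integrable_pdf (by linarith) hr).const_mul _

lemma integral_id_gamma {a r : ℝ} (ha : 0 < a) (hr : 0 < r) :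
    ∫ x, x ∂(gammaMeasure a r) = a / r := by
  rw [integral_eq ha hr]
  simp_rw [pdf_mul_id ha hr]
  rw [integral_const_mul, integral_pdf (by linarith) hr, mul_one]


lemma zpow_convex_aux {m : ℕ} (hm : 1 ≤ m) {v w c d : ℝ} (hv : 0 < v) (hw : 0 < w)
    (hvw : v ≠ w) (hc : 0 < c) (hd : 0 < d) (hcd : c + d = 1) :
    ((c * v + d * w) ^ m)⁻¹ < c * (v ^ m)⁻¹ + d * (w ^ m)⁻¹ := by
  have hm0 : -(m : ℤ) ≠ 0 := by
    have : (1 : ℤ) ≤ (m : ℤ) := by exact_mod_cast hm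
    omega
  have hm1 : -(m : ℤ) ≠ 1 := by
    have : (1 : ℤ) ≤ (m : ℤ) := by exact_mod_cast hm
    omega
  have h := (strictConvexOn_zpow hm0 hm1).2 (Set.mem_Ioi.mpr hv) (Set.mem_Ioi.mpr hw)
    hvw hc hd hcd
  simp only [smul_eq_mul, zpow_neg, zpow_natCast] at h
  exact h

lemma min_aux {m : ℕ} (hm : 1 ≤ m) (q : ℝ) {u : ℝ} (hu : 0 < u) (hne : u ≠ Real.exp (-q)) :
    Real.exp (-(((m : ℝ) + 1) * q)) * ((Real.exp (-q)) ^ m)⁻¹ + m * Real.exp (-q)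
      < Real.exp (-(((m : ℝ) + 1) * q)) * (u ^ m)⁻¹ + m * u := by
  set L := Real.log u with hLdef
  have hu' : u = exp L := (Real.exp_log hu).symm
  have hm1 : (0 : ℝ) < (m : ℝ) + 1 := by positivity
  have hmpos : (0 : ℝ) < (m : ℝ) := by exact_mod_cast Nat.pos_of_ne_zero (by omega)
  have hLq : L ≠ -q := by
    intro h
    exact hne (by rw [hu', h])
  have hXL : -(((m : ℝ) + 1) * q) - m * L ≠ L := by
    intro h
    apply hLq
    have h2 : ((m : ℝ) + 1) * L = ((m : ℝ) + 1) * (-q) := by linarith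
    exact mul_left_cancel₀ hm1.ne' h2
  have hcd : 1 / ((m : ℝ) + 1) + (m : ℝ) / ((m : ℝ) + 1) = 1 := by rw [← add_div, add_comm]; exact div_self hm1.ne'
  have h := strictConvexOn_exp.2 (Set.mem_univ (-(((m : ℝ) + 1) * q) - m * L))
    (Set.mem_univ L) hXL (by positivity) (div_pos hmpos hm1) hcd
  simp only [smul_eq_mul] at h
  have harg : 1 / ((m : ℝ) + 1) * (-(((m : ℝ) + 1) * q) - m * L)
      + (m : ℝ) / ((m : ℝ) + 1) * L = -q := by
    field_simp
    ring
  rw [harg] at h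
  have h2 : ((m : ℝ) + 1) * Real.exp (-q)
      < Real.exp (-(((m : ℝ) + 1) * q) - m * L) + m * Real.exp L := by
    have h3 := mul_lt_mul_of_pos_left h hm1
    rw [mul_add, show ((m : ℝ) + 1) * (1 / ((m : ℝ) + 1)
        * Real.exp (-(((m : ℝ) + 1) * q) - m * L))
        = Real.exp (-(((m : ℝ) + 1) * q) - m * L) by field_simp,
      show ((m : ℝ) + 1) * ((m : ℝ) / ((m : ℝ) + 1) * Real.exp L)
        = (m : ℝ) * Real.exp L by field_simp] at h3
    exact h3
  have e1 : Real.exp (-(((m : ℝ) + 1) * q)) * ((Real.exp (-q)) ^ m)⁻¹ = Real.exp (-q) := by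
    rw [← Real.exp_nat_mul, ← Real.exp_neg, ← Real.exp_add]
    congr 1
    try ring
  have e2 : Real.exp (-(((m : ℝ) + 1) * q)) * (u ^ m)⁻¹
      = Real.exp (-(((m : ℝ) + 1) * q) - m * L) := by
    rw [hu', ← Real.exp_nat_mul, ← Real.exp_neg, ← Real.exp_add]
    congr 1
    try ring
  rw [e1, e2, hu']
  linarith

end GammaRiskAux

open MeasureTheory ProbabilityTheory

/-- The conditional linex risk `ψ ↦ E[exp (p (T ψ / σ - 1)) - p (T ψ / σ - 1) - 1]`, where
`T ~ Gamma(m, θ)`, is finite (the integrand is integrable) and strictly convex on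
`{ψ | p ψ θ / σ < 1}`, and is uniquely minimized there at
`ψ* = (σ/(p θ)) (1 - exp (-p/(m+1)))`. -/
theorem gamma_conditional_risk_strictly_convex_min (m : ℕ) (hm : 1 ≤ m) (θ σ p : ℝ)
    (hθ : 0 < θ) (hσ : 0 < σ) (hp : p ≠ 0) :
    let R : ℝ → ℝ := fun ψ =>
      ∫ x, (Real.exp (p * (x * ψ / σ - 1)) - p * (x * ψ / σ - 1) - 1)
        ∂(gammaMeasure m (1 / θ))
    let D : Set ℝ := {ψ : ℝ | p * ψ * θ / σ < 1}
    let ψstar : ℝ := σ / (p * θ) * (1 - Real.exp (-p / (m + 1)))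
    (∀ ψ ∈ D, Integrable
        (fun x => Real.exp (p * (x * ψ / σ - 1)) - p * (x * ψ / σ - 1) - 1)
        (gammaMeasure m (1 / θ))) ∧
    StrictConvexOn ℝ D R ∧
    ψstar ∈ D ∧
    ∀ ψ ∈ D, ψ ≠ ψstar → R ψstar < R ψ := by
  intro R D ψstar
  have ha : (0 : ℝ) < (m : ℝ) := by exact_mod_cast Nat.pos_of_ne_zero (by omega)
  have hr : (0 : ℝ) < 1 / θ := by positivity
  have := GammaRiskAux.integrable_pdf ha hr
  haveI : IsProbabilityMeasure (gammaMeasure (m : ℝ) (1 / θ)) :=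
    isProbabilityMeasure_gammaMeasure ha hr
  -- basic facts for ψ ∈ D
  have ht : ∀ ψ ∈ D, p * ψ / σ < 1 / θ := by
    intro ψ hψ
    rw [lt_div_iff₀ hθ]
    calc p * ψ / σ * θ = p * ψ * θ / σ := by ring
    _ < 1 := hψ
  have hu : ∀ ψ ∈ D, 0 < 1 - p * ψ * θ / σ := by
    intro ψ hψ
    have h : p * ψ * θ / σ < 1 := hψ
    linarith
  -- rewriting of the integrand
  have hkey : ∀ ψ : ℝ, (fun x => Real.exp (p * (x * ψ / σ - 1)) - p * (x * ψ / σ - 1) - 1)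
      = fun x => (Real.exp (-p) * Real.exp ((p * ψ / σ) * x) - (p * ψ / σ) * x) + (p - 1) := by
    intro ψ
    funext x
    rw [show p * (x * ψ / σ - 1) = p * ψ / σ * x + -p by ring, Real.exp_add]
    ring
  -- integrability
  have hint : ∀ ψ ∈ D, Integrable
      (fun x => Real.exp (p * (x * ψ / σ - 1)) - p * (x * ψ / σ - 1) - 1)
      (gammaMeasure m (1 / θ)) := by
    intro ψ hψ
    rw [hkey ψ]
    exact (((GammaRiskAux.integrable_exp_gamma ha hr (ht ψ hψ)).const_mul _).sub
      ((GammaRiskAux.integrable_id_gamma ha hr).const_mul _)).add (integrable_const _)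
  -- closed form for the risk
  have hR : ∀ ψ ∈ D, R ψ = Real.exp (-p) * ((1 - p * ψ * θ / σ) ^ m)⁻¹
      + m * (1 - p * ψ * θ / σ) + (p - 1 - (m : ℝ)) := by
    intro ψ hψ
    have h1 := GammaRiskAux.integrable_exp_gamma ha hr (ht ψ hψ)
    have h2 := GammaRiskAux.integrable_id_gamma ha hr
    show (∫ x, (Real.exp (p * (x * ψ / σ - 1)) - p * (x * ψ / σ - 1) - 1)
        ∂(gammaMeasure m (1 / θ))) = _
    have hA : Integrable (fun x => Real.exp (-p) * Real.exp (p * ψ / σ * x) - p * ψ / σ * x)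
        (gammaMeasure m (1 / θ)) := (h1.const_mul _).sub (h2.const_mul _)
    rw [hkey ψ, integral_add hA (integrable_const _),
      integral_sub (h1.const_mul _) (h2.const_mul _), integral_const_mul, integral_const_mul,
      GammaRiskAux.integral_exp_gamma ha hr (ht ψ hψ), GammaRiskAux.integral_id_gamma ha hr,
      integral_const]
    simp only [measure_univ, ENNReal.toReal_one, smul_eq_mul, one_mul, probReal_univ]
    have hu' := (hu ψ hψ).ne'
    have hd : 1 / θ - p * ψ / σ ≠ 0 := (sub_pos.mpr (ht ψ hψ)).ne'
    have hbase : (1 / θ) / (1 / θ - p * ψ / σ) = (1 - p * ψ * θ / σ)⁻¹ := by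
      field_simp
    rw [Real.rpow_natCast, hbase, inv_pow]
    have hlin : -(p * ψ / σ * ((m : ℝ) / (1 / θ))) + (p - 1)
        = (m : ℝ) * (1 - p * ψ * θ / σ) + (p - 1 - (m : ℝ)) := by
      field_simp
      ring
    linarith [hlin]
  have hbσ : p * θ / σ ≠ 0 := div_ne_zero (mul_ne_zero hp hθ.ne') hσ.ne'
  have hconvD : Convex ℝ D := by
    intro x hx y hy c d hc hd hcd
    have hx' : p * x * θ / σ < 1 := hx
    have hy' : p * y * θ / σ < 1 := hy
    show p * (c • x + d • y) * θ / σ < 1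
    simp only [smul_eq_mul]
    have hE : p * (c * x + d * y) * θ / σ
        = c * (p * x * θ / σ) + d * (p * y * θ / σ) := by ring
    rw [hE]
    rcases eq_or_lt_of_le hc with h0 | h0
    · have hd1 : d = 1 := by linarith
      rw [← h0, hd1]
      simpa using hy'
    · nlinarith [mul_le_mul_of_nonneg_left hy'.le hd, mul_lt_mul_of_pos_left hx' h0]
  have hpθ : ((m : ℝ) + 1) ≠ 0 := by positivity
  have hstar : p * ψstar * θ / σ = 1 - Real.exp (-p / ((m : ℝ) + 1)) := by
    show p * (σ / (p * θ) * (1 - Real.exp (-p / ((m : ℝ) + 1)))) * θ / σ = _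
    field_simp
  have hstarD : ψstar ∈ D := by
    show p * ψstar * θ / σ < 1
    rw [hstar]
    linarith [Real.exp_pos (-p / ((m : ℝ) + 1))]
  refine ⟨hint, ⟨hconvD, ?_⟩, hstarD, ?_⟩
  · -- strict convexity
    intro x hx y hy hxy c d hc hd hcd
    have hz : c • x + d • y ∈ D := hconvD hx hy hc.le hd.le hcd
    simp only [smul_eq_mul] at hz ⊢
    rw [hR x hx, hR y hy, hR (c * x + d * y) hz]
    have hux := hu x hx
    have huy := hu y hy
    have hne : 1 - p * x * θ / σ ≠ 1 - p * y * θ / σ := by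
      intro h
      apply hxy
      have h2 : (p * θ / σ) * x = (p * θ / σ) * y := by linear_combination -h
      exact mul_left_cancel₀ hbσ h2
    have key := GammaRiskAux.zpow_convex_aux hm hux huy hne hc hd hcd
    have haff : 1 - p * (c * x + d * y) * θ / σ
        = c * (1 - p * x * θ / σ) + d * (1 - p * y * θ / σ) := by linear_combination -hcd
    rw [haff]
    have hmul := mul_lt_mul_of_pos_left key (Real.exp_pos (-p))
    have hC : c * (p - 1 - (m : ℝ)) + d * (p - 1 - (m : ℝ)) = p - 1 - (m : ℝ) := by
      rw [← add_mul, hcd, one_mul]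
    nlinarith [hmul, hC]
  · -- unique minimum
    intro ψ hψ hneψ
    rw [hR ψstar hstarD, hR ψ hψ]
    have hustar : 1 - p * ψstar * θ / σ = Real.exp (-(p / ((m : ℝ) + 1))) := by
      rw [hstar, neg_div]
      ring
    have hneu : 1 - p * ψ * θ / σ ≠ Real.exp (-(p / ((m : ℝ) + 1))) := by
      intro h
      apply hneψ
      rw [← hustar] at h
      have h2 : (p * θ / σ) * ψ = (p * θ / σ) * ψstar := by linear_combination -h
      exact mul_left_cancel₀ hbσ h2
    have hmin := GammaRiskAux.min_aux hm (p / ((m : ℝ) + 1)) (hu ψ hψ) hneu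
    have hpe : -(((m : ℝ) + 1) * (p / ((m : ℝ) + 1))) = -p := by
      field_simp
    rw [hpe] at hmin
    rw [hustar]
    linarith [hmin]
end

section
/- Suppose for each value u of a statistic U, the conditional risk ψ ↦ R₁(u, ψ) is strictly convex with unique minimizer m(u), and suppose ψ₀(u) = clamp(ψ(u), a(u), b(u)) where a(u) ≤ m(u) ≤ b(u) for all u. If P(ψ₀(U) ≠ ψ(U)) > 0, then E[R₁(U, ψ₀(U))] < E[R₁(U, ψ(U))] (assuming both expectations are finite). -/
/-!
Clamping moves `ψ u` towards the minimizer `m u` without passing it, and a convex function with a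
strict global minimum at `m` is strictly decreasing left of `m` and strictly increasing right of
it. So the clamped procedure never has larger conditional risk, and strictly smaller risk wherever
it differs from `ψ`; integrating over the event of positive probability where they differ gives
the strict inequality of the risks.
-/

open MeasureTheory Set

section Convex

variable {𝕜 : Type*} [Field 𝕜] [LinearOrder 𝕜] [IsStrictOrderedRing 𝕜] {f : 𝕜 → 𝕜} {m : 𝕜}

theorem ConvexOn.strictMonoOn_Ici_of_forall_lt (hf : ConvexOn 𝕜 univ f)
    (hmin : ∀ y, y ≠ m → f m < f y) : StrictMonoOn f (Ici m) := by
  intro u hu v _ huv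
  rcases (mem_Ici.1 hu).eq_or_lt with rfl | hmu
  · exact hmin v huv.ne'
  · exact hf.strictMonoOn (mem_univ m) hmu (hmin u hmu.ne') ⟨mem_univ u, le_rfl⟩
      ⟨mem_univ v, huv.le⟩ huv

theorem ConvexOn.strictAntiOn_Iic_of_forall_lt (hf : ConvexOn 𝕜 univ f)
    (hmin : ∀ y, y ≠ m → f m < f y) : StrictAntiOn f (Iic m) := by
  intro u _ v hv huv
  rcases (mem_Iic.1 hv).eq_or_lt with rfl | hvm
  · exact hmin u huv.ne
  · exact hf.strictAntiOn (mem_univ m) hvm (hmin v hvm.ne) ⟨mem_univ u, huv.le⟩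
      ⟨mem_univ v, le_rfl⟩ huv

theorem ConvexOn.apply_max_min_lt (hf : ConvexOn 𝕜 univ f) (hmin : ∀ y, y ≠ m → f m < f y)
    {a b x : 𝕜} (ham : a ≤ m) (hmb : m ≤ b) (hne : max a (min x b) ≠ x) :
    f (max a (min x b)) < f x := by
  rcases lt_or_ge x a with hxa | hax
  · have hclamp : max a (min x b) = a := by
      rw [min_eq_left (hxa.le.trans (ham.trans hmb)), max_eq_left hxa.le]
    rw [hclamp]
    exact hf.strictAntiOn_Iic_of_forall_lt hmin (hxa.le.trans ham) ham hxa
  · rcases le_or_gt x b with hxb | hbx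
    · exact absurd (by rw [min_eq_left hxb, max_eq_right hax]) hne
    · have hclamp : max a (min x b) = b := by
        rw [min_eq_right hbx.le, max_eq_right (ham.trans hmb)]
      rw [hclamp]
      exact hf.strictMonoOn_Ici_of_forall_lt hmin hmb (hmb.trans hbx.le) hbx

end Convex

theorem MeasureTheory.integral_lt_integral_of_ae_le_of_measure_setOf_lt_pos {α : Type*}
    [MeasurableSpace α] {μ : Measure α} {f g : α → ℝ} (hf : Integrable f μ) (hg : Integrable g μ)
    (hfg : f ≤ᵐ[μ] g) (hlt : 0 < μ {x | f x < g x}) : ∫ x, f x ∂μ < ∫ x, g x ∂μ := by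
  have hsupp : {x | f x < g x} ⊆ Function.support (g - f) := fun x hx => (sub_pos.2 hx).ne'
  have hpos : 0 < ∫ x, (g - f) x ∂μ :=
    (integral_pos_iff_support_of_nonneg_ae (hfg.mono fun x h => sub_nonneg.2 h) (hg.sub hf)).2
      (hlt.trans_le (measure_mono hsupp))
  rw [Pi.sub_def, integral_sub hg hf] at hpos
  linarith

theorem clamped_procedure_dominates_general {Ω α : Type*} [MeasurableSpace Ω] [MeasurableSpace α]
    (ℙ : Measure Ω) (U : Ω → α)
    (R₁ : α → ℝ → ℝ) (m a b ψ ψ₀ : α → ℝ)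
    (hconv : ∀ u, StrictConvexOn ℝ Set.univ (R₁ u))
    (hmin : ∀ u, ∀ x : ℝ, x ≠ m u → R₁ u (m u) < R₁ u x)
    (ham : ∀ u, a u ≤ m u) (hmb : ∀ u, m u ≤ b u)
    (hψ₀ : ∀ u, ψ₀ u = max (a u) (min (ψ u) (b u)))
    (hpos : 0 < ℙ {ω | ψ₀ (U ω) ≠ ψ (U ω)})
    (hint₀ : Integrable (fun ω => R₁ (U ω) (ψ₀ (U ω))) ℙ)
    (hint : Integrable (fun ω => R₁ (U ω) (ψ (U ω))) ℙ) :
    ∫ ω, R₁ (U ω) (ψ₀ (U ω)) ∂ℙ < ∫ ω, R₁ (U ω) (ψ (U ω)) ∂ℙ := by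
  have hlt : ∀ u, ψ₀ u ≠ ψ u → R₁ u (ψ₀ u) < R₁ u (ψ u) := fun u hne => by
    rw [hψ₀] at hne ⊢
    exact (hconv u).convexOn.apply_max_min_lt (hmin u) (ham u) (hmb u) hne
  have hle : ∀ u, R₁ u (ψ₀ u) ≤ R₁ u (ψ u) := fun u =>
    (eq_or_ne (ψ₀ u) (ψ u)).elim (fun h => h ▸ le_rfl) fun h => (hlt u h).le
  exact integral_lt_integral_of_ae_le_of_measure_setOf_lt_pos hint₀ hint
    (ae_of_all _ fun ω => hle (U ω)) (hpos.trans_le (measure_mono fun ω => hlt (U ω)))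

/-- Abstract Brewster–Zidek type domination: if for each value `u` of a statistic `U` the
conditional risk `ψ ↦ R₁ u ψ` is strictly convex with unique minimizer `m u`, and
`ψ₀ u = clamp (ψ u) (a u) (b u)` with `a u ≤ m u ≤ b u`, then as soon as
`P(ψ₀(U) ≠ ψ(U)) > 0` (and both risks are finite), the clamped procedure has strictly
smaller expected risk. -/
theorem clamped_procedure_dominates {Ω α : Type*} [MeasurableSpace Ω] [MeasurableSpace α]
    (ℙ : Measure Ω) [IsProbabilityMeasure ℙ] (U : Ω → α) (hU : Measurable U)
    (R₁ : α → ℝ → ℝ) (m a b ψ ψ₀ : α → ℝ)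
    (hconv : ∀ u, StrictConvexOn ℝ Set.univ (R₁ u))
    (hmin : ∀ u, ∀ x : ℝ, x ≠ m u → R₁ u (m u) < R₁ u x)
    (ham : ∀ u, a u ≤ m u) (hmb : ∀ u, m u ≤ b u)
    (hψ₀ : ∀ u, ψ₀ u = max (a u) (min (ψ u) (b u)))
    (hpos : 0 < ℙ {ω | ψ₀ (U ω) ≠ ψ (U ω)})
    (hint₀ : Integrable (fun ω => R₁ (U ω) (ψ₀ (U ω))) ℙ)
    (hint : Integrable (fun ω => R₁ (U ω) (ψ (U ω))) ℙ) :
    ∫ ω, R₁ (U ω) (ψ₀ (U ω)) ∂ℙ < ∫ ω, R₁ (U ω) (ψ (U ω)) ∂ℙ :=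
  clamped_procedure_dominates_general ℙ U R₁ m a b ψ ψ₀ hconv hmin ham hmb hψ₀ hpos hint₀ hint
end
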